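/- Let X, Y0, Y1 be finite nonempty sets, d a metric on X with ∞-Wasserstein metric W∞, and Φ ⊆ X×X. Let A0 : X → D(Y0) and A1 : Y0 × X → D(Y1) be mechanisms, and define their sequential composition with shared input (A1 ∘ A0)(x)[R] = ∑_{y0 ∈ Y0} A0(x)[y0]·A1(y0,x)[R]. If A0 provides (ε0, W∞, δ0)-extended distribution privacy with respect to Φ#∞, and for every y0 ∈ Y0 the mechanism x ↦ A1(y0,x) provides (ε1, W∞, δ1)-extended distribution privacy with respect to Φ#∞, then A1 ∘ A0 provides (ε0+ε1, W∞, (δ0+δ1)·|Φ|)-extended distribution privacy with respect to Φ#∞. -/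
import Mathlib


/-!
Common definitions: probability distributions on finite sets, mechanisms,
liftings, couplings, lifted relations, Wasserstein metric, privacy notions.
-/

/-- `l` is a probability distribution on the finite set `X`. -/
def IsDist {X : Type*} [Fintype X] (l : X → ℝ) : Prop :=
  (∀ x, 0 ≤ l x) ∧ ∑ x, l x = 1

/-- `A` is a mechanism from `X` to `Y`: each `A x` is a distribution on `Y`. -/
def IsMech {X Y : Type*} [Fintype X] [Fintype Y] (A : X → Y → ℝ) : Prop :=
  ∀ x, IsDist (A x)

/-- Probability that a distribution `μ` assigns to a set `R`. -/
def probOf {Y : Type*} (μ : Y → ℝ) (R : Finset Y) : ℝ := ∑ y ∈ R, μ y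

/-- The lifting `A#` of a mechanism `A`, applied to an input distribution `l`. -/
def liftDist {X Y : Type*} [Fintype X] (A : X → Y → ℝ) (l : X → ℝ) : Y → ℝ :=
  fun y => ∑ x, l x * A x y

/-- `γ` is a coupling of `l0` and `l1`. -/
def IsCoupling {X : Type*} [Fintype X] (γ : X × X → ℝ) (l0 l1 : X → ℝ) : Prop :=
  IsDist γ ∧ (∀ x0, l0 x0 = ∑ x1, γ (x0, x1)) ∧ (∀ x1, l1 x1 = ∑ x0, γ (x0, x1))

/-- The lifted relation `Φ#` on distributions. -/
def liftRel {X : Type*} [Fintype X] (Φ : Finset (X × X)) (l0 l1 : X → ℝ) : Prop :=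
  IsDist l0 ∧ IsDist l1 ∧ ∃ γ, IsCoupling γ l0 l1 ∧ ∀ p, 0 < γ p → p ∈ Φ

/-- The largest move `max_{(x0,x1) ∈ supp γ} d x0 x1` of a coupling `γ`. -/
noncomputable def maxCost {X : Type*} (d : X → X → ℝ) (γ : X × X → ℝ) : ℝ :=
  sSup {r | ∃ p : X × X, 0 < γ p ∧ r = d p.1 p.2}

/-- The ∞-Wasserstein metric w.r.t. `d`. -/
noncomputable def Winf {X : Type*} [Fintype X] (d : X → X → ℝ) (l0 l1 : X → ℝ) : ℝ :=
  sInf {r | ∃ γ, IsCoupling γ l0 l1 ∧ maxCost d γ = r}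

/-- The relation `Φ#∞`: pairs of distributions admitting a coupling supported in `Φ`
that attains the ∞-Wasserstein metric. -/
def liftRelInf {X : Type*} [Fintype X] (d : X → X → ℝ) (Φ : Finset (X × X))
    (l0 l1 : X → ℝ) : Prop :=
  IsDist l0 ∧ IsDist l1 ∧
    ∃ γ, IsCoupling γ l0 l1 ∧ (∀ p, 0 < γ p → p ∈ Φ) ∧ maxCost d γ = Winf d l0 l1

/-- `d` is a metric on `X`. -/
structure IsMetric {X : Type*} (d : X → X → ℝ) : Prop where
  nonneg : ∀ x y, 0 ≤ d x y
  eq_zero_iff : ∀ x y, d x y = 0 ↔ x = y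
  symm : ∀ x y, d x y = d y x
  triangle : ∀ x y z, d x z ≤ d x y + d y z

/-- `(ε,δ)`-differential privacy of `A` w.r.t. the adjacency relation `Φ`. -/
def DP {X Y : Type*} (A : X → Y → ℝ) (Φ : Finset (X × X)) (ε δ : ℝ) : Prop :=
  ∀ p ∈ Φ, ∀ R : Finset Y, probOf (A p.1) R ≤ Real.exp ε * probOf (A p.2) R + δ

/-- `(ε,d,δ)`-extended differential privacy of `A` w.r.t. `Φ`. -/
def XDP {X Y : Type*} (A : X → Y → ℝ) (Φ : Finset (X × X)) (ε : ℝ)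
    (d : X → X → ℝ) (δ : ℝ) : Prop :=
  ∀ p ∈ Φ, ∀ R : Finset Y,
    probOf (A p.1) R ≤ Real.exp (ε * d p.1 p.2) * probOf (A p.2) R + δ

/-- `(ε,δ)`-distribution privacy of `M` w.r.t. a relation `Ψ` on distributions. -/
def DistP {X Z : Type*} [Fintype X] (M : X → Z → ℝ)
    (Ψ : (X → ℝ) → (X → ℝ) → Prop) (ε δ : ℝ) : Prop :=
  ∀ l0 l1, Ψ l0 l1 → ∀ R : Finset Z,
    probOf (liftDist M l0) R ≤ Real.exp ε * probOf (liftDist M l1) R + δ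

/-- `(ε,D,δ)`-extended distribution privacy of `M` w.r.t. `Ψ`. -/
def XDistP {X Z : Type*} [Fintype X] (M : X → Z → ℝ)
    (Ψ : (X → ℝ) → (X → ℝ) → Prop) (ε : ℝ) (D : (X → ℝ) → (X → ℝ) → ℝ) (δ : ℝ) : Prop :=
  ∀ l0 l1, Ψ l0 l1 → ∀ R : Finset Z,
    probOf (liftDist M l0) R ≤ Real.exp (ε * D l0 l1) * probOf (liftDist M l1) R + δ

/-- `(ε,δ)`-probabilistic distribution privacy of `M` w.r.t. `Ψ`. -/
def pDistP {X Z : Type*} [Fintype X] [DecidableEq Z] (M : X → Z → ℝ)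
    (Ψ : (X → ℝ) → (X → ℝ) → Prop) (ε δ : ℝ) : Prop :=
  ∀ l0 l1, Ψ l0 l1 → ∃ R' : Finset Z,
    probOf (liftDist M l0) R' ≤ δ ∧ probOf (liftDist M l1) R' ≤ δ ∧
    ∀ R : Finset Z,
      probOf (liftDist M l0) (R \ R') ≤ Real.exp ε * probOf (liftDist M l1) (R \ R') ∧
      probOf (liftDist M l1) (R \ R') ≤ Real.exp ε * probOf (liftDist M l0) (R \ R')

/-- The uniform distribution on a finite set `Y`. -/
noncomputable def uniformDist (Y : Type*) [Fintype Y] : Y → ℝ :=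
  fun _ => (Fintype.card Y : ℝ)⁻¹

/-- The `(k,ν,A)`-tupling mechanism from `X` to `Y^(k+1)`. -/
noncomputable def tupling {X Y : Type*} [Fintype Y] (k : ℕ) (ν : Y → ℝ) (A : X → Y → ℝ) :
    X → (Fin (k + 1) → Y) → ℝ :=
  fun x yb => ((k : ℝ) + 1)⁻¹ *
    ∑ i : Fin (k + 1), A x (yb i) * ∏ j ∈ Finset.univ.erase i, ν (yb j)

/-- The set of distributions `Λ_{β,η,A}`. -/
def Lam {X Y : Type*} [Fintype X] [Fintype Y] (β η : ℝ) (A : X → Y → ℝ)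
    (l : X → ℝ) : Prop :=
  IsDist l ∧ (1 - η) * (Fintype.card Y : ℝ) ≤ ({y : Y | liftDist A l y ≤ β}.ncard : ℝ)

/-- The product distribution `λ0 × λ1` on `X × X`. -/
def prodDist {X : Type*} (l0 l1 : X → ℝ) : X × X → ℝ := fun p => l0 p.1 * l1 p.2

/-- Sequential composition with shared input. -/
def compShared {X Y0 Y1 : Type*} [Fintype Y0] (A0 : X → Y0 → ℝ)
    (A1 : Y0 → X → Y1 → ℝ) : X → Y1 → ℝ :=
  fun x y1 => ∑ y0, A0 x y0 * A1 y0 x y1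

/-- Sequential composition with independent inputs. -/
def compInd {X Y0 Y1 : Type*} [Fintype Y0] (A0 : X → Y0 → ℝ)
    (A1 : Y0 → X → Y1 → ℝ) : X × X → Y1 → ℝ :=
  fun p y1 => ∑ y0, A0 p.1 y0 * A1 y0 p.2 y1

/-- Post-processing composition. -/
def postProc {X Y Z : Type*} [Fintype Y] (A0 : X → Y → ℝ) (A1 : Y → Z → ℝ) :
    X → Z → ℝ :=
  fun x z => ∑ y, A0 x y * A1 y z

/-- The point distribution at `x`. -/
def pointDist {X : Type*} [DecidableEq X] (x : X) : X → ℝ :=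
  fun x' => if x' = x then 1 else 0

/-! ### Auxiliary lemmas -/

lemma probOf_nonneg' {Y : Type*} (μ : Y → ℝ) (h : ∀ y, 0 ≤ μ y) (R : Finset Y) :
    0 ≤ probOf μ R := Finset.sum_nonneg fun y _ => h y

lemma probOf_le_one' {Y : Type*} [Fintype Y] {μ : Y → ℝ} (h : IsDist μ) (R : Finset Y) :
    probOf μ R ≤ 1 := by
  rw [← h.2]
  exact Finset.sum_le_sum_of_subset_of_nonneg (Finset.subset_univ R) (fun y _ _ => h.1 y)

lemma probOf_lift {X Y : Type*} [Fintype X] (M : X → Y → ℝ) (l : X → ℝ) (R : Finset Y) :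
    probOf (liftDist M l) R = ∑ x, l x * probOf (M x) R := by
  simp only [probOf, liftDist, Finset.mul_sum]
  exact Finset.sum_comm

lemma probOf_compShared {X Y0 Y1 : Type*} [Fintype Y0] (A0 : X → Y0 → ℝ)
    (A1 : Y0 → X → Y1 → ℝ) (x : X) (R : Finset Y1) :
    probOf (compShared A0 A1 x) R = ∑ y0, A0 x y0 * probOf (A1 y0 x) R := by
  simp only [probOf, compShared, Finset.mul_sum]
  exact Finset.sum_comm

lemma pointDist_isDist {X : Type*} [Fintype X] [DecidableEq X] (x : X) :
    IsDist (pointDist x) := by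
  constructor
  · intro x'
    unfold pointDist
    split <;> norm_num
  · simp [pointDist]

lemma liftDist_point {X Y : Type*} [Fintype X] [DecidableEq X] (A : X → Y → ℝ) (x : X) :
    liftDist A (pointDist x) = A x := by
  funext y
  simp [liftDist, pointDist, ite_mul]

lemma pointCoupling_isCoupling {X : Type*} [Fintype X] [DecidableEq X] (x0 x1 : X) :
    IsCoupling (pointDist (x0, x1)) (pointDist x0) (pointDist x1) := by
  refine ⟨pointDist_isDist _, ?_, ?_⟩
  · intro a
    simp only [pointDist, Prod.mk.injEq]
    by_cases h : a = x0 <;> simp [h]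
  · intro b
    simp only [pointDist, Prod.mk.injEq]
    by_cases h : b = x1 <;> simp [h]

lemma coupling_point_eq {X : Type*} [Fintype X] [DecidableEq X] {x0 x1 : X} {γ : X × X → ℝ}
    (h : IsCoupling γ (pointDist x0) (pointDist x1)) :
    γ = pointDist (x0, x1) := by
  obtain ⟨⟨hnn, hsum⟩, hm0, hm1⟩ := h
  have hz : ∀ q : X × X, q ≠ (x0, x1) → γ q = 0 := by
    intro q hq
    by_cases h1 : q.1 = x0
    · have h2 : q.2 ≠ x1 := fun h2 => hq (Prod.ext h1 h2)
      have hs : ∑ a, γ (a, q.2) = 0 := by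
        rw [← hm1 q.2]
        simp [pointDist, h2]
      have := (Finset.sum_eq_zero_iff_of_nonneg (fun a _ => hnn (a, q.2))).1 hs q.1
        (Finset.mem_univ _)
      simpa using this
    · have hs : ∑ b, γ (q.1, b) = 0 := by
        rw [← hm0 q.1]
        simp [pointDist, h1]
      have := (Finset.sum_eq_zero_iff_of_nonneg (fun b _ => hnn (q.1, b))).1 hs q.2
        (Finset.mem_univ _)
      simpa using this
  have hone : γ (x0, x1) = 1 := by
    rw [← hsum, Finset.sum_eq_single (x0, x1)]
    · intro b _ hb; exact hz b hb
    · intro hb; exact absurd (Finset.mem_univ _) hb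
  funext q
  by_cases hq : q = (x0, x1)
  · subst hq; simp [pointDist, hone]
  · simp [pointDist, hq, hz q hq]

lemma maxCost_point {X : Type*} [DecidableEq X] (d : X → X → ℝ) (x0 x1 : X) :
    maxCost d (pointDist (x0, x1)) = d x0 x1 := by
  have hset : {r | ∃ p : X × X, 0 < pointDist (x0, x1) p ∧ r = d p.1 p.2} = {d x0 x1} := by
    ext r
    constructor
    · rintro ⟨p, hp, rfl⟩
      have hpeq : p = (x0, x1) := by
        by_contra h
        simp [pointDist, h] at hp
      subst hpeq; rfl
    · rintro rfl
      exact ⟨(x0, x1), by simp [pointDist], rfl⟩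
  rw [maxCost, hset, csSup_singleton]

lemma winf_point {X : Type*} [Fintype X] [DecidableEq X] (d : X → X → ℝ) (x0 x1 : X) :
    Winf d (pointDist x0) (pointDist x1) = d x0 x1 := by
  have hset : {r | ∃ γ, IsCoupling γ (pointDist x0) (pointDist x1) ∧ maxCost d γ = r}
      = {d x0 x1} := by
    ext r
    constructor
    · rintro ⟨γ, hγ, rfl⟩
      rw [coupling_point_eq hγ, maxCost_point]
      rfl
    · rintro rfl
      exact ⟨pointDist (x0, x1), pointCoupling_isCoupling x0 x1, maxCost_point d x0 x1⟩
  rw [Winf, hset, csInf_singleton]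

lemma liftRelInf_point {X : Type*} [Fintype X] [DecidableEq X] (d : X → X → ℝ)
    (Φ : Finset (X × X)) {x0 x1 : X} (h : (x0, x1) ∈ Φ) :
    liftRelInf d Φ (pointDist x0) (pointDist x1) := by
  refine ⟨pointDist_isDist x0, pointDist_isDist x1, pointDist (x0, x1),
    pointCoupling_isCoupling x0 x1, ?_, ?_⟩
  · intro p hp
    have hpeq : p = (x0, x1) := by
      by_contra hne
      simp [pointDist, hne] at hp
    subst hpeq; exact h
  · rw [maxCost_point, winf_point]

lemma xdistP_point {X Y : Type*} [Fintype X] [DecidableEq X] {A : X → Y → ℝ}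
    {d : X → X → ℝ} {Φ : Finset (X × X)} {ε δ : ℝ}
    (h : XDistP A (liftRelInf d Φ) ε (Winf d) δ) {x0 x1 : X} (hx : (x0, x1) ∈ Φ)
    (R : Finset Y) :
    probOf (A x0) R ≤ Real.exp (ε * d x0 x1) * probOf (A x1) R + δ := by
  have := h (pointDist x0) (pointDist x1) (liftRelInf_point d Φ hx) R
  rwa [liftDist_point, liftDist_point, winf_point] at this

lemma exp_le_of_sets {Y : Type*} [Fintype Y] (μ ν g : Y → ℝ) (c δ : ℝ)
    (hg0 : ∀ y, 0 ≤ g y) (hg1 : ∀ y, g y ≤ 1)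
    (h : ∀ S : Finset Y, probOf μ S ≤ c * probOf ν S + δ) :
    ∑ y, μ y * g y ≤ c * ∑ y, ν y * g y + δ := by
  classical
  set S : Finset Y := Finset.univ.filter (fun y => c * ν y < μ y) with hS
  have key : ∑ y, (μ y - c * ν y) * g y ≤ ∑ y ∈ S, (μ y - c * ν y) := by
    calc ∑ y, (μ y - c * ν y) * g y
        ≤ ∑ y, (if c * ν y < μ y then μ y - c * ν y else 0) := by
          apply Finset.sum_le_sum
          intro y _
          by_cases hy : c * ν y < μ y
          · rw [if_pos hy]
            nlinarith [hg0 y, hg1 y]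
          · rw [if_neg hy]
            push_neg at hy
            nlinarith [hg0 y, hg1 y]
      _ = ∑ y ∈ S, (μ y - c * ν y) := by
          rw [hS, Finset.sum_filter]
  have h2 : ∑ y ∈ S, (μ y - c * ν y) = probOf μ S - c * probOf ν S := by
    rw [Finset.sum_sub_distrib, probOf, probOf, Finset.mul_sum]
  have expand : ∑ y, (μ y - c * ν y) * g y = ∑ y, μ y * g y - c * ∑ y, ν y * g y := by
    rw [Finset.mul_sum, ← Finset.sum_sub_distrib]
    apply Finset.sum_congr rfl
    intro y _
    ring
  have h3 := h S
  rw [expand] at key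
  rw [h2] at key
  linarith

/-- sequential composition (shared input) of XDistP mechanisms. -/
theorem seq_comp_xdistP {X Y0 Y1 : Type*} [Fintype X] [Fintype Y0] [Fintype Y1]
    [Nonempty X] [Nonempty Y0] [Nonempty Y1]
    (d : X → X → ℝ) (hd : IsMetric d)
    (ε0 ε1 δ0 δ1 : ℝ) (hε0 : 0 ≤ ε0) (hε1 : 0 ≤ ε1)
    (hδ0 : 0 ≤ δ0) (hδ0' : δ0 ≤ 1) (hδ1 : 0 ≤ δ1) (hδ1' : δ1 ≤ 1)
    (Φ : Finset (X × X))
    (A0 : X → Y0 → ℝ) (hA0 : IsMech A0)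
    (A1 : Y0 → X → Y1 → ℝ) (hA1 : ∀ y0, IsMech (A1 y0))
    (h0 : XDistP A0 (liftRelInf d Φ) ε0 (Winf d) δ0)
    (h1 : ∀ y0, XDistP (A1 y0) (liftRelInf d Φ) ε1 (Winf d) δ1) :
    XDistP (compShared A0 A1) (liftRelInf d Φ) (ε0 + ε1) (Winf d)
      ((δ0 + δ1) * (Φ.card : ℝ)) := by
  classical
  intro l0 l1 hΨ R
  obtain ⟨hl0, hl1, γ, hγ, hsupp, hmax⟩ := hΨ
  obtain ⟨⟨hγnn, hγsum⟩, hm0, hm1⟩ := hγ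
  set w := Winf d l0 l1 with hw
  -- there is a point with positive mass
  have hex : ∃ p, 0 < γ p := by
    by_contra h
    push_neg at h
    have hz : ∀ p ∈ Finset.univ, γ p = 0 := fun p _ => le_antisymm (h p) (hγnn p)
    rw [Finset.sum_eq_zero hz] at hγsum
    norm_num at hγsum
  obtain ⟨p₀, hp₀⟩ := hex
  have hΦcard : 1 ≤ (Φ.card : ℝ) := by
    exact_mod_cast Finset.card_pos.2 ⟨p₀, hsupp p₀ hp₀⟩
  -- distance is bounded by w on the support of γ
  have hdle : ∀ p : X × X, 0 < γ p → d p.1 p.2 ≤ w := by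
    intro p hp
    rw [← hmax]
    apply le_csSup
    · apply Set.Finite.bddAbove
      apply Set.Finite.subset (Set.finite_range (fun q : X × X => d q.1 q.2))
      rintro r ⟨q, _, rfl⟩
      exact ⟨q, rfl⟩
    · exact ⟨p, hp, rfl⟩
  have hw0 : 0 ≤ w := le_trans (hd.nonneg p₀.1 p₀.2) (hdle p₀ hp₀)
  -- the per-input probability
  set F : X → ℝ := fun x => ∑ y0, A0 x y0 * probOf (A1 y0 x) R with hF
  have hF0 : ∀ x, 0 ≤ F x := fun x => Finset.sum_nonneg fun y0 _ =>
    mul_nonneg ((hA0 x).1 y0) (probOf_nonneg' _ (fun y => ((hA1 y0) x).1 y) R)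
  -- rewrite both sides via the coupling
  have hFx : ∀ x, probOf (compShared A0 A1 x) R = F x := by
    intro x
    rw [hF]
    exact probOf_compShared A0 A1 x R
  have hL : probOf (liftDist (compShared A0 A1) l0) R = ∑ p : X × X, γ p * F p.1 := by
    rw [probOf_lift]
    simp only [hFx]
    calc ∑ x, l0 x * F x = ∑ x, (∑ b, γ (x, b)) * F x := by
          apply Finset.sum_congr rfl
          intro x _
          rw [← hm0 x]
      _ = ∑ p : X × X, γ p * F p.1 := by
          rw [Fintype.sum_prod_type]
          simp_rw [Finset.sum_mul]
  have hR : probOf (liftDist (compShared A0 A1) l1) R = ∑ p : X × X, γ p * F p.2 := by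
    rw [probOf_lift]
    simp only [hFx]
    calc ∑ x, l1 x * F x = ∑ b, (∑ a, γ (a, b)) * F b := by
          apply Finset.sum_congr rfl
          intro b _
          rw [← hm1 b]
      _ = ∑ p : X × X, γ p * F p.2 := by
          rw [Fintype.sum_prod_type]
          rw [Finset.sum_comm]
          simp_rw [Finset.sum_mul]
  -- the key pointwise claim
  have claim : ∀ p : X × X, 0 < γ p →
      F p.1 ≤ Real.exp ((ε0 + ε1) * w) * F p.2 + (δ0 + δ1) := by
    rintro ⟨x0, x1⟩ hp
    have hpΦ : (x0, x1) ∈ Φ := hsupp _ hp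
    have hdd : d x0 x1 ≤ w := hdle (x0, x1) hp
    set c1 : ℝ := Real.exp (ε1 * d x0 x1) with hc1
    set c0 : ℝ := Real.exp (ε0 * d x0 x1) with hc0
    set g1 : Y0 → ℝ := fun y0 => probOf (A1 y0 x0) R with hg1def
    set g2 : Y0 → ℝ := fun y0 => probOf (A1 y0 x1) R with hg2def
    set gt : Y0 → ℝ := fun y0 => min (g1 y0) (c1 * g2 y0) with hgt
    have hg1nn : ∀ y0, 0 ≤ g1 y0 := fun y0 =>
      probOf_nonneg' _ (fun y => ((hA1 y0) x0).1 y) R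
    have hg2nn : ∀ y0, 0 ≤ g2 y0 := fun y0 =>
      probOf_nonneg' _ (fun y => ((hA1 y0) x1).1 y) R
    have hg1le1 : ∀ y0, g1 y0 ≤ 1 := fun y0 => probOf_le_one' ((hA1 y0) x0) R
    have h1pt : ∀ y0, g1 y0 ≤ c1 * g2 y0 + δ1 := fun y0 =>
      xdistP_point (h1 y0) hpΦ R
    have hgtnn : ∀ y0, 0 ≤ gt y0 := fun y0 =>
      le_min (hg1nn y0) (mul_nonneg (Real.exp_nonneg _) (hg2nn y0))
    have hgtle1 : ∀ y0, gt y0 ≤ 1 := fun y0 => le_trans (min_le_left _ _) (hg1le1 y0)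
    have hg1gt : ∀ y0, g1 y0 ≤ gt y0 + δ1 := by
      intro y0
      rcases le_total (g1 y0) (c1 * g2 y0) with h | h
      · rw [hgt]; simp only [min_eq_left h]; linarith
      · rw [hgt]; simp only [min_eq_right h]; linarith [h1pt y0]
    -- step 1
    have step1 : F x0 ≤ (∑ y0, A0 x0 y0 * gt y0) + δ1 := by
      have : F x0 ≤ ∑ y0, A0 x0 y0 * (gt y0 + δ1) := by
        apply Finset.sum_le_sum
        intro y0 _
        exact mul_le_mul_of_nonneg_left (hg1gt y0) ((hA0 x0).1 y0)
      calc F x0 ≤ ∑ y0, A0 x0 y0 * (gt y0 + δ1) := this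
        _ = (∑ y0, A0 x0 y0 * gt y0) + (∑ y0, A0 x0 y0) * δ1 := by
            simp_rw [mul_add]
            rw [Finset.sum_add_distrib, Finset.sum_mul]
        _ = (∑ y0, A0 x0 y0 * gt y0) + δ1 := by rw [(hA0 x0).2, one_mul]
    -- step 2
    have step2 : ∑ y0, A0 x0 y0 * gt y0 ≤ c0 * ∑ y0, A0 x1 y0 * gt y0 + δ0 :=
      exp_le_of_sets (A0 x0) (A0 x1) gt c0 δ0 hgtnn hgtle1
        (fun S => xdistP_point h0 hpΦ S)
    -- step 3
    have step3 : ∑ y0, A0 x1 y0 * gt y0 ≤ c1 * F x1 := by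
      have : ∑ y0, A0 x1 y0 * gt y0 ≤ ∑ y0, A0 x1 y0 * (c1 * g2 y0) := by
        apply Finset.sum_le_sum
        intro y0 _
        exact mul_le_mul_of_nonneg_left (min_le_right _ _) ((hA0 x1).1 y0)
      calc ∑ y0, A0 x1 y0 * gt y0 ≤ ∑ y0, A0 x1 y0 * (c1 * g2 y0) := this
        _ = c1 * F x1 := by
            rw [hF, Finset.mul_sum]
            apply Finset.sum_congr rfl
            intro y0 _
            ring
    have hc0nn : 0 ≤ c0 := Real.exp_nonneg _
    have hcomb : F x0 ≤ c0 * c1 * F x1 + (δ0 + δ1) := by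
      have := mul_le_mul_of_nonneg_left step3 hc0nn
      nlinarith
    have hexp : c0 * c1 = Real.exp ((ε0 + ε1) * d x0 x1) := by
      rw [hc0, hc1, ← Real.exp_add]
      ring_nf
    have hexple : Real.exp ((ε0 + ε1) * d x0 x1) ≤ Real.exp ((ε0 + ε1) * w) :=
      Real.exp_le_exp.2 (mul_le_mul_of_nonneg_left hdd (by linarith))
    have hFx1 : 0 ≤ F x1 := hF0 x1
    calc F x0 ≤ c0 * c1 * F x1 + (δ0 + δ1) := hcomb
      _ = Real.exp ((ε0 + ε1) * d x0 x1) * F x1 + (δ0 + δ1) := by rw [hexp]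
      _ ≤ Real.exp ((ε0 + ε1) * w) * F x1 + (δ0 + δ1) := by
          have := mul_le_mul_of_nonneg_right hexple hFx1
          linarith
  -- assemble
  rw [hL, hR]
  have main : ∑ p : X × X, γ p * F p.1
      ≤ Real.exp ((ε0 + ε1) * w) * (∑ p : X × X, γ p * F p.2) + (δ0 + δ1) := by
    calc ∑ p : X × X, γ p * F p.1
        ≤ ∑ p : X × X, (γ p * (Real.exp ((ε0 + ε1) * w) * F p.2) + γ p * (δ0 + δ1)) := by
          apply Finset.sum_le_sum
          intro p _
          rcases eq_or_lt_of_le (hγnn p) with h | h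
          · rw [← h]; simp
          · have hc := claim p h
            nlinarith [le_of_lt h]
      _ = Real.exp ((ε0 + ε1) * w) * (∑ p : X × X, γ p * F p.2)
          + (∑ p : X × X, γ p) * (δ0 + δ1) := by
          rw [Finset.sum_add_distrib, Finset.sum_mul, Finset.mul_sum]
          congr 1
          apply Finset.sum_congr rfl
          intro p _
          ring
      _ = Real.exp ((ε0 + ε1) * w) * (∑ p : X × X, γ p * F p.2) + (δ0 + δ1) := by
          rw [hγsum, one_mul]
  have hδΦ : δ0 + δ1 ≤ (δ0 + δ1) * (Φ.card : ℝ) :=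
    le_mul_of_one_le_right (by linarith) hΦcard
  linarith
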